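/- Let u : ℝ² → ℝ be a locally Lipschitz viscosity solution of the Lorentzian eikonal equation g(∇u,∇u) = −1 on the 2-dimensional Minkowski space-time with past-directed time orientation (∂u/∂x(p) > 0 at every point p where u is differentiable). Suppose p ∈ ℝ², T > 0, and v = (v₁, v₂) ∈ ℝ² with v₁ = √(1 + v₂²) satisfy u(p + t·v) = u(p) + t for all t ∈ [0, T]. Then for every t ∈ (0, T), u is differentiable at p + t·v with ∂u/∂x(p + t·v) = v₁ and ∂u/∂y(p + t·v) = −v₂ (i.e. the Lorentzian gradient satisfies ∇u(p + t·v) = −v). -/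

import Mathlib

/-!
At a point where `u` is differentiable, `u` can be touched from above by `C¹` functions at
nearby points with almost the same gradient, so the viscosity inequality passes to `Du`:
`(∂ₓu)² - (∂ᵧu)² ≥ 1` with `∂ₓu > 0`. By the reverse Cauchy–Schwarz inequality, `Du k ≥ |k|`
for every future timelike `k`, where `|k| = √(k₁² - k₂²)`. Integrating along almost every line
(Rademacher and Fubini) and using continuity gives `u (z + k) ≥ u z + |k|`. Near
`q = p + t • v` this squeezes `u` between `u q - s + |w - (q - s • v)|` and
`u q + s - |q + s • v - w|`, which agree with `u` at `q` because the curve is calibrated, and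
both have derivative `w ↦ v₁ w₁ - v₂ w₂` at `q`.
-/

open Filter Topology Set MeasureTheory Metric

/-- `u` is a viscosity solution of the Lorentzian eikonal equation
`g(∇u,∇u) = -1` on the open set `O` in 2-dimensional Minkowski space-time
(metric `-dx² + dy²`): for every upper test function `φ` at `p ∈ O`,
`(∂φ/∂x(p))² - (∂φ/∂y(p))² ≥ 1`, and for every lower test function `φ` at `p`,
`(∂φ/∂x(p))² - (∂φ/∂y(p))² ≤ 1`. -/
def IsViscositySolution (u : ℝ × ℝ → ℝ) (O : Set (ℝ × ℝ)) : Prop :=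
  (∀ p ∈ O, ∀ φ : ℝ × ℝ → ℝ, ∀ U : Set (ℝ × ℝ),
      IsOpen U → p ∈ U → U ⊆ O → ContDiffOn ℝ 1 φ U → φ p = u p →
      (∀ x ∈ U, u x ≤ φ x) →
      1 ≤ (fderiv ℝ φ p (1, 0)) ^ 2 - (fderiv ℝ φ p (0, 1)) ^ 2) ∧
  (∀ p ∈ O, ∀ φ : ℝ × ℝ → ℝ, ∀ U : Set (ℝ × ℝ),
      IsOpen U → p ∈ U → U ⊆ O → ContDiffOn ℝ 1 φ U → φ p = u p →
      (∀ x ∈ U, φ x ≤ u x) →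
      (fderiv ℝ φ p (1, 0)) ^ 2 - (fderiv ℝ φ p (0, 1)) ^ 2 ≤ 1)

theorem HasFDerivAt.of_eventually_le_of_eventually_le
    {E : Type*} [NormedAddCommGroup E] [NormedSpace ℝ E] {f g h : E → ℝ}
    {L : E →L[ℝ] ℝ} {x : E} (hf : HasFDerivAt f L x) (hh : HasFDerivAt h L x)
    (hfg : ∀ᶠ y in 𝓝 x, f y ≤ g y) (hgh : ∀ᶠ y in 𝓝 x, g y ≤ h y)
    (hfx : f x = g x) (hhx : h x = g x) : HasFDerivAt g L x := by
  rw [hasFDerivAt_iff_isLittleO, Asymptotics.isLittleO_iff] at *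
  intro ε hε
  filter_upwards [hf hε, hh hε, hfg, hgh] with y hfy hhy hfgy hghy
  simp only [Real.norm_eq_abs, abs_le] at *
  constructor <;> linarith [hfy.1, hhy.2]

theorem LipschitzOnWith.mul_sub_le_sub_of_ae_le_deriv {g : ℝ → ℝ} {K : NNReal} {a b c : ℝ}
    (hab : a ≤ b) (hg : LipschitzOnWith K g (Icc a b))
    (hc : ∀ᵐ s, s ∈ Icc a b → c ≤ deriv g s) : c * (b - a) ≤ g b - g a := by
  have hac : AbsolutelyContinuousOnInterval g a b :=
    LipschitzOnWith.absolutelyContinuousOnInterval (by rwa [uIcc_of_le hab])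
  rw [← hac.integral_deriv_eq_sub, show c * (b - a) = ∫ _ in a..b, c by simp [mul_comm]]
  refine intervalIntegral.integral_mono_ae_restrict hab intervalIntegrable_const
    hac.intervalIntegrable_deriv ?_
  rwa [EventuallyLE, ae_restrict_iff' measurableSet_Icc]

theorem LocallyLipschitz.ae_differentiableAt {E F : Type*} [NormedAddCommGroup E]
    [NormedSpace ℝ E] [FiniteDimensional ℝ E] [MeasurableSpace E] [BorelSpace E]
    [NormedAddCommGroup F] [NormedSpace ℝ F] [FiniteDimensional ℝ F]
    {μ : Measure E} [μ.IsAddHaarMeasure] {f : E → F} (hf : LocallyLipschitz f) :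
    ∀ᵐ x ∂μ, DifferentiableAt ℝ f x := by
  refine measure_null_of_locally_null _ fun x _ => ?_
  obtain ⟨K, t, ht, hK⟩ := hf x
  obtain ⟨U, hUt, hU, hxU⟩ := _root_.mem_nhds_iff.1 ht
  refine ⟨_, inter_mem_nhdsWithin _ (hU.mem_nhds hxU), ?_⟩
  have := (hK.mono hUt).ae_differentiableWithinAt_of_mem (μ := μ)
  rw [ae_iff] at this
  refine measure_mono_null (fun y ⟨hy, hyU⟩ => ?_) this
  exact fun h => hy ((h hyU).differentiableAt (hU.mem_nhds hyU))

theorem ae_ae_add_smul {E : Type*} [NormedAddCommGroup E] [NormedSpace ℝ E]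
    [MeasurableSpace E] [BorelSpace E] [SecondCountableTopology E]
    {μ : Measure E} [μ.IsAddRightInvariant] [SFinite μ] {P : E → Prop}
    (hP : ∀ᵐ x ∂μ, P x) (h : E) : ∀ᵐ z ∂μ, ∀ᵐ s : ℝ, P (z + s • h) := by
  obtain ⟨N, hPN, hNm, hN⟩ := exists_measurable_superset_of_null (ae_iff.1 hP)
  have hline : Measurable fun zs : E × ℝ => zs.1 + zs.2 • h := by fun_prop
  refine Measure.ae_ae_of_ae_prod (p := fun zs : E × ℝ => P (zs.1 + zs.2 • h)) ?_
  refine measure_mono_null (t := (fun zs : E × ℝ => zs.1 + zs.2 • h) ⁻¹' N)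
    (fun zs hzs => hPN hzs) ?_
  rw [Measure.prod_apply_symm (hline hNm)]
  have hfib (s : ℝ) :
      μ ((fun z => (z, s)) ⁻¹' ((fun zs : E × ℝ => zs.1 + zs.2 • h) ⁻¹' N)) = 0 :=
    by rw [← hN]; exact measure_preimage_add_right μ (s • h) N
  simp only [hfib, lintegral_zero]

theorem LocallyLipschitz.add_le_of_ae_differentiableAt_line {E : Type*} [NormedAddCommGroup E]
    [NormedSpace ℝ E] {u : E → ℝ} (hu : LocallyLipschitz u) {k : E} {c : ℝ}
    (hk : ∀ x, DifferentiableAt ℝ u x → c ≤ fderiv ℝ u x k) {z : E}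
    (hz : ∀ᵐ s : ℝ, DifferentiableAt ℝ u (z + s • k)) : u z + c ≤ u (z + k) := by
  set g := fun s : ℝ => u (z + s • k)
  have hline : ∀ s : ℝ, HasDerivAt (fun s : ℝ => z + s • k) k s := fun s => by
    simpa using ((hasDerivAt_id s).smul_const k).const_add z
  have hg : LocallyLipschitz g :=
    hu.comp (contDiff_const.add (contDiff_id.smul contDiff_const) :
      ContDiff ℝ 1 fun s : ℝ => z + s • k).locallyLipschitz
  obtain ⟨K, hK⟩ :=
    hg.locallyLipschitzOn.exists_lipschitzOnWith_of_compact (isCompact_Icc (a := (0 : ℝ)) (b := 1))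
  have := hK.mul_sub_le_sub_of_ae_le_deriv zero_le_one (c := c) <| by
    filter_upwards [hz] with s hs _
    rw [show deriv g s = _ from (hs.hasFDerivAt.comp_hasDerivAt s (hline s)).deriv]
    exact hk _ hs
  simp only [g, zero_smul, one_smul, add_zero, sub_zero, mul_one] at this
  linarith

theorem LocallyLipschitz.add_le_of_le_fderiv {E : Type*} [NormedAddCommGroup E]
    [NormedSpace ℝ E] [FiniteDimensional ℝ E] {u : E → ℝ} (hu : LocallyLipschitz u) {k : E}
    {c : ℝ} (hk : ∀ x, DifferentiableAt ℝ u x → c ≤ fderiv ℝ u x k) (z : E) :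
    u z + c ≤ u (z + k) := by
  borelize E
  have hdense : Dense {z | ∀ᵐ s : ℝ, DifferentiableAt ℝ u (z + s • k)} :=
    Measure.dense_of_ae (μ := Measure.addHaar)
      (ae_ae_add_smul hu.ae_differentiableAt k)
  have hclosed : IsClosed {z | u z + c ≤ u (z + k)} :=
    isClosed_le (hu.continuous.add continuous_const)
      (hu.continuous.comp (continuous_id.add continuous_const))
  exact hclosed.closure_subset_iff.2 (fun z hz => hu.add_le_of_ae_differentiableAt_line hk hz)
    (hdense.closure_eq ▸ mem_univ z)

/-- `lorentzPairing k = -g(k, ·)` for the Minkowski metric `g = -dx² + dy²`. -/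
def lorentzPairing (k : ℝ × ℝ) : ℝ × ℝ →L[ℝ] ℝ :=
  k.1 • ContinuousLinearMap.fst ℝ ℝ ℝ - k.2 • ContinuousLinearMap.snd ℝ ℝ ℝ

@[simp]
theorem lorentzPairing_apply (k w : ℝ × ℝ) : lorentzPairing k w = k.1 * w.1 - k.2 * w.2 := by
  simp [lorentzPairing]

theorem lorentzPairing_smul (s : ℝ) (k : ℝ × ℝ) :
    lorentzPairing (s • k) = s • lorentzPairing k := by
  ext <;> simp

noncomputable def lorentzNorm (k : ℝ × ℝ) : ℝ := √(lorentzPairing k k)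

theorem lorentzNorm_smul {s : ℝ} (hs : 0 ≤ s) (k : ℝ × ℝ) :
    lorentzNorm (s • k) = s * lorentzNorm k := by
  have : lorentzPairing (s • k) (s • k) = s ^ 2 * lorentzPairing k k := by simp; ring
  rw [lorentzNorm, this, Real.sqrt_mul (sq_nonneg s), Real.sqrt_sq hs, lorentzNorm]

theorem hasFDerivAt_lorentzNorm {k : ℝ × ℝ} (hk : 0 < lorentzPairing k k) :
    HasFDerivAt lorentzNorm ((lorentzNorm k)⁻¹ • lorentzPairing k) k := by
  have hsq :
      HasFDerivAt (fun w : ℝ × ℝ => lorentzPairing w w) ((2 : ℝ) • lorentzPairing k) k := by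
    have h₁ : HasFDerivAt (fun w : ℝ × ℝ => w.1) (ContinuousLinearMap.fst ℝ ℝ ℝ) k :=
      hasFDerivAt_fst
    have h₂ : HasFDerivAt (fun w : ℝ × ℝ => w.2) (ContinuousLinearMap.snd ℝ ℝ ℝ) k :=
      hasFDerivAt_snd
    simp only [lorentzPairing_apply]
    refine ((h₁.fun_mul h₁).fun_sub (h₂.fun_mul h₂)).congr_fderiv ?_
    ext <;> simp <;> ring
  refine (hsq.sqrt hk.ne').congr_fderiv ?_
  rw [smul_smul, lorentzNorm]
  congr 1
  field_simp

/-- Reverse Cauchy–Schwarz inequality for the Minkowski metric. -/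
theorem sqrt_sub_sq_le_mul_add_mul {a b h₁ h₂ : ℝ} (ha : 0 < a) (hab : 1 ≤ a ^ 2 - b ^ 2)
    (hh : |h₂| ≤ h₁) : √(h₁ ^ 2 - h₂ ^ 2) ≤ h₁ * a + h₂ * b := by
  have hba : |b| ≤ a := abs_le_of_sq_le_sq (by linarith) ha.le
  have hnonneg : 0 ≤ h₁ * a + h₂ * b := by
    have := mul_le_mul hh hba (abs_nonneg b) ((abs_nonneg h₂).trans hh)
    rw [← abs_mul] at this
    linarith [neg_abs_le (h₂ * b)]
  have hh' : 0 ≤ h₁ ^ 2 - h₂ ^ 2 := by nlinarith [sq_abs h₂, abs_nonneg h₂]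
  -- `(h₁a + h₂b)² - (h₁² - h₂²)(a² - b²) = (h₁b + h₂a)²`
  refine (Real.sqrt_le_left hnonneg).2 ?_
  nlinarith [sq_nonneg (h₁ * b + h₂ * a), mul_le_mul_of_nonneg_left hab hh']

theorem ContinuousLinearMap.apply_eq_fst_mul_add_snd_mul (L : ℝ × ℝ →L[ℝ] ℝ) (k : ℝ × ℝ) :
    L k = k.1 * L (1, 0) + k.2 * L (0, 1) := by
  conv_lhs => rw [show k = k.1 • ((1 : ℝ), (0 : ℝ)) + k.2 • ((0 : ℝ), (1 : ℝ)) by ext <;> simp]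
  rw [map_add, map_smul, map_smul, smul_eq_mul, smul_eq_mul]

theorem lorentzNorm_le_apply {L : ℝ × ℝ →L[ℝ] ℝ} (hL₀ : 0 < L (1, 0))
    (hL : 1 ≤ L (1, 0) ^ 2 - L (0, 1) ^ 2) {k : ℝ × ℝ} (hk : |k.2| ≤ k.1) :
    lorentzNorm k ≤ L k := by
  rw [L.apply_eq_fst_mul_add_snd_mul, lorentzNorm, lorentzPairing_apply, ← sq, ← sq]
  exact sqrt_sub_sq_le_mul_add_mul hL₀ hL hk

theorem sq_norm_le_fst_sq_add_snd_sq (y : ℝ × ℝ) : ‖y‖ ^ 2 ≤ y.1 ^ 2 + y.2 ^ 2 := by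
  rw [Prod.norm_def, Real.norm_eq_abs, Real.norm_eq_abs]
  rcases max_choice |y.1| |y.2| with h | h <;> rw [h, sq_abs] <;> nlinarith

theorem hasFDerivAt_fst_sq_add_snd_sq (y : ℝ × ℝ) :
    HasFDerivAt (fun x : ℝ × ℝ => x.1 ^ 2 + x.2 ^ 2)
      ((2 * y.1) • ContinuousLinearMap.fst ℝ ℝ ℝ + (2 * y.2) • ContinuousLinearMap.snd ℝ ℝ ℝ)
      y := by
  refine ((hasFDerivAt_fst.pow 2).add (hasFDerivAt_snd.pow 2)).congr_fderiv ?_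
  ext <;> simp

theorem norm_smul_fst_add_smul_snd_le (a b : ℝ) :
    ‖a • ContinuousLinearMap.fst ℝ ℝ ℝ + b • ContinuousLinearMap.snd ℝ ℝ ℝ‖ ≤ |a| + |b| := by
  refine ContinuousLinearMap.opNorm_le_bound _ (by positivity) fun k => ?_
  simp only [add_apply, smul_apply, ContinuousLinearMap.coe_fst', ContinuousLinearMap.coe_snd',
    smul_eq_mul, Real.norm_eq_abs]
  have h₁ : |k.1| ≤ ‖k‖ := norm_fst_le k
  have h₂ : |k.2| ≤ ‖k‖ := norm_snd_le k
  calc |a * k.1 + b * k.2| ≤ |a| * |k.1| + |b| * |k.2| := by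
        rw [← abs_mul, ← abs_mul]; exact abs_add_le _ _
    _ ≤ (|a| + |b|) * ‖k‖ := by nlinarith [abs_nonneg a, abs_nonneg b]

theorem exists_isMaxOn_sub_quadratic {u : ℝ × ℝ → ℝ} {D : ℝ × ℝ →L[ℝ] ℝ} {x₀ : ℝ × ℝ}
    {s : Set (ℝ × ℝ)} (hs : s ∈ 𝓝 x₀) (hu : ContinuousOn u s) (hD : HasFDerivAt u D x₀)
    {c : ℝ} (hc₀ : 0 < c) (hc₁ : c < 1) :
    ∃ r > 0, closedBall x₀ r ⊆ s ∧ ∃ m ∈ ball x₀ r, ‖m - x₀‖ ≤ c * r ∧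
      IsMaxOn (fun x => u x - D (x - x₀) - r⁻¹ * ((x - x₀).1 ^ 2 + (x - x₀).2 ^ 2))
        (closedBall x₀ r) m := by
  have hlin := (hasFDerivAt_iff_isLittleO.1 hD).def hc₀
  obtain ⟨r, hr, hrs⟩ := nhds_basis_closedBall.mem_iff.1 (inter_mem hs hlin)
  set G := fun x => u x - D (x - x₀) - r⁻¹ * ((x - x₀).1 ^ 2 + (x - x₀).2 ^ 2)
  have hGcont : ContinuousOn G (closedBall x₀ r) :=
    ((hu.mono fun x hx => (hrs hx).1).sub (by fun_prop)).sub (by fun_prop)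
  obtain ⟨m, hm, hmax⟩ := (isCompact_closedBall x₀ r).exists_isMaxOn
    ⟨x₀, mem_closedBall_self hr.le⟩ hGcont
  have hGm : G x₀ ≤ G m := hmax (mem_closedBall_self hr.le)
  have hlinm : |u m - u x₀ - D (m - x₀)| ≤ c * ‖m - x₀‖ := by
    simpa [Real.norm_eq_abs] using (hrs hm).2
  have hnorm := sq_norm_le_fst_sq_add_snd_sq (m - x₀)
  have hmr : ‖m - x₀‖ ≤ c * r := by
    have : r⁻¹ * ‖m - x₀‖ ^ 2 ≤ c * ‖m - x₀‖ := by
      simp only [G, sub_self, map_zero, Prod.fst_zero, Prod.snd_zero] at hGm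
      nlinarith [abs_le.1 hlinm, inv_pos.2 hr]
    have : ‖m - x₀‖ ^ 2 ≤ c * r * ‖m - x₀‖ := by
      have := mul_le_mul_of_nonneg_left this hr.le
      rwa [← mul_assoc, mul_inv_cancel₀ hr.ne', one_mul, mul_left_comm, ← mul_assoc] at this
    by_contra! h
    nlinarith [norm_nonneg (m - x₀), mul_pos hc₀ hr]
  refine ⟨r, hr, fun x hx => (hrs hx).1, m, ?_, hmr, hmax⟩
  rw [mem_ball, dist_eq_norm]
  nlinarith

theorem HasFDerivAt.exists_upper_test_function_near {u : ℝ × ℝ → ℝ} {D : ℝ × ℝ →L[ℝ] ℝ}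
    {x₀ : ℝ × ℝ} {s : Set (ℝ × ℝ)} (hD : HasFDerivAt u D x₀) (hs : s ∈ 𝓝 x₀)
    (hu : ContinuousOn u s) {ε : ℝ} (hε : 0 < ε) :
    ∃ m, ∃ φ : ℝ × ℝ → ℝ, ∃ U, IsOpen U ∧ m ∈ U ∧ U ⊆ s ∧ ContDiffOn ℝ 1 φ U ∧
      φ m = u m ∧ (∀ x ∈ U, u x ≤ φ x) ∧ ‖fderiv ℝ φ m - D‖ ≤ ε := by
  obtain ⟨r, hr, hrs, m, hm, hmr, hmax⟩ := exists_isMaxOn_sub_quadratic hs hu hD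
    (c := min (ε / 4) (1 / 2)) (by positivity) (by linarith [min_le_right (ε / 4) (1 / 2)])
  set φ := fun x : ℝ × ℝ => D (x - x₀) + r⁻¹ * ((x - x₀).1 ^ 2 + (x - x₀).2 ^ 2) +
    (u m - D (m - x₀) - r⁻¹ * ((m - x₀).1 ^ 2 + (m - x₀).2 ^ 2))
  have hφ : HasFDerivAt φ (D + r⁻¹ • ((2 * (m - x₀).1) • ContinuousLinearMap.fst ℝ ℝ ℝ +
      (2 * (m - x₀).2) • ContinuousLinearMap.snd ℝ ℝ ℝ)) m := by
    have hsq := (hasFDerivAt_fst_sq_add_snd_sq (m - x₀)).comp m (hasFDerivAt_sub_const x₀)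
    have hD' := D.hasFDerivAt.comp m (hasFDerivAt_sub_const (𝕜 := ℝ) (x := m) x₀)
    exact ((hD'.add (hsq.const_mul r⁻¹)).add_const _).congr_fderiv (by ext <;> simp)
  refine ⟨m, φ, ball x₀ r, isOpen_ball, hm, ball_subset_closedBall.trans hrs,
    (by fun_prop : ContDiff ℝ 1 φ).contDiffOn, by simp [φ], fun x hx => ?_, ?_⟩
  · have := hmax (ball_subset_closedBall hx)
    simp only [mem_ofPred_eq] at this
    simp only [φ]
    linarith
  · rw [hφ.fderiv, add_sub_cancel_left, norm_smul, Real.norm_of_nonneg (by positivity)]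
    have := norm_smul_fst_add_smul_snd_le (2 * (m - x₀).1) (2 * (m - x₀).2)
    have h₁ : |(m - x₀).1| ≤ ‖m - x₀‖ := by simpa using norm_fst_le (m - x₀)
    have h₂ : |(m - x₀).2| ≤ ‖m - x₀‖ := by simpa using norm_snd_le (m - x₀)
    rw [abs_mul, abs_mul, abs_two] at this
    calc r⁻¹ * ‖_‖ ≤ r⁻¹ * (4 * (min (ε / 4) (1 / 2) * r)) := by gcongr; linarith
      _ = 4 * min (ε / 4) (1 / 2) := by field_simp
      _ ≤ ε := by linarith [min_le_left (ε / 4) (1 / 2)]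

theorem IsViscositySolution.one_le_of_hasFDerivAt {u : ℝ × ℝ → ℝ} {O : Set (ℝ × ℝ)}
    (hvisc : IsViscositySolution u O) (hO : IsOpen O) (hu : ContinuousOn u O)
    {x : ℝ × ℝ} (hx : x ∈ O) {D : ℝ × ℝ →L[ℝ] ℝ} (hD : HasFDerivAt u D x) :
    1 ≤ D (1, 0) ^ 2 - D (0, 1) ^ 2 := by
  have hS : IsClosed {L : ℝ × ℝ →L[ℝ] ℝ | 1 ≤ L (1, 0) ^ 2 - L (0, 1) ^ 2} :=
    isClosed_le continuous_const (by fun_prop)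
  show D ∈ {L : ℝ × ℝ →L[ℝ] ℝ | 1 ≤ L (1, 0) ^ 2 - L (0, 1) ^ 2}
  rw [← hS.closure_eq, Metric.mem_closure_iff]
  intro ε hε
  obtain ⟨m, φ, U, hU, hmU, hUO, hφ, hφm, hle, hclose⟩ :=
    hD.exists_upper_test_function_near (hO.mem_nhds hx) hu (half_pos hε)
  refine ⟨fderiv ℝ φ m, hvisc.1 m (hUO hmU) φ U hU hmU hUO hφ hφm hle, ?_⟩
  rw [dist_comm, dist_eq_norm]
  linarith

theorem hasFDerivAt_of_forall_add_lorentzNorm_le {u : ℝ × ℝ → ℝ}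
    (hτ : ∀ z k : ℝ × ℝ, |k.2| < k.1 → u z + lorentzNorm k ≤ u (z + k)) {q v : ℝ × ℝ}
    (hv : lorentzPairing v v = 1) (hv₁ : 0 < v.1) {s : ℝ} (hs : 0 < s)
    (hback : u (q - s • v) = u q - s) (hfwd : u (q + s • v) = u q + s) :
    HasFDerivAt u (lorentzPairing v) q := by
  have hsv : 0 < lorentzPairing (s • v) (s • v) := by
    rw [lorentzPairing_smul, smul_apply, map_smul, hv]; simp [hs]
  have hτsv : lorentzNorm (s • v) = s := by
    rw [lorentzNorm_smul hs.le, lorentzNorm, hv, Real.sqrt_one, mul_one]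
  have hL : HasFDerivAt lorentzNorm (lorentzPairing v) (s • v) := by
    simpa [hτsv, lorentzPairing_smul, inv_smul_smul₀ hs.ne'] using hasFDerivAt_lorentzNorm hsv
  have hfut : {k : ℝ × ℝ | |k.2| < k.1} ∈ 𝓝 (s • v) := by
    refine (isOpen_lt (by fun_prop) continuous_fst).mem_nhds ?_
    have : |v.2| < v.1 := by
      rw [lorentzPairing_apply] at hv
      exact abs_lt_of_sq_lt_sq (by nlinarith) hv₁.le
    simpa [abs_mul, abs_of_pos hs] using mul_lt_mul_of_pos_left this hs
  refine HasFDerivAt.of_eventually_le_of_eventually_le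
    (f := fun w => u q - s + lorentzNorm (w - (q - s • v)))
    (h := fun w => u q + s - lorentzNorm (q + s • v - w)) (L := lorentzPairing v)
    ?_ ?_ ?_ ?_ ?_ ?_
  · have hL' : HasFDerivAt lorentzNorm (lorentzPairing v) (q - (q - s • v)) := by
      rwa [sub_sub_cancel]
    refine ((hL'.comp q (hasFDerivAt_sub_const _)).const_add _).congr_fderiv ?_
    ext <;> simp
  · have hL' : HasFDerivAt lorentzNorm (lorentzPairing v) (q + s • v - q) := by
      rwa [add_sub_cancel_left]
    refine ((hL'.comp q ((hasFDerivAt_id q).const_sub _)).const_sub _).congr_fderiv ?_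
    ext <;> simp
  · have hnear := (continuous_id.sub continuous_const).continuousAt.preimage_mem_nhds
      (by rwa [id, sub_sub_cancel] : {k : ℝ × ℝ | |k.2| < k.1} ∈ 𝓝 (id q - (q - s • v)))
    filter_upwards [hnear] with w hw
    simpa [hback] using hτ (q - s • v) (w - (q - s • v)) hw
  · have hnear := (continuous_const.sub continuous_id).continuousAt.preimage_mem_nhds
      (by rwa [id, add_sub_cancel_left] : {k : ℝ × ℝ | |k.2| < k.1} ∈ 𝓝 (q + s • v - id q))
    filter_upwards [hnear] with w hw
    have := hτ w (q + s • v - w) hw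
    rw [add_sub_cancel, hfwd] at this
    linarith
  · simp [hτsv]
  · simp [hτsv]

theorem differentiable_along_calibrated_curve_general
    (u : ℝ × ℝ → ℝ) (hLip : LocallyLipschitz u)
    (hvisc : IsViscositySolution u Set.univ)
    (hpast : ∀ q : ℝ × ℝ, DifferentiableAt ℝ u q → 0 < fderiv ℝ u q (1, 0))
    (p : ℝ × ℝ) (T : ℝ) (v : ℝ × ℝ)
    (hv : v.1 = Real.sqrt (1 + v.2 ^ 2))
    (hcal : ∀ t ∈ Set.Icc (0:ℝ) T, u (p + t • v) = u p + t) :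
    ∀ t ∈ Set.Ioo (0:ℝ) T, DifferentiableAt ℝ u (p + t • v) ∧
      fderiv ℝ u (p + t • v) (1, 0) = v.1 ∧
      fderiv ℝ u (p + t • v) (0, 1) = -v.2 := by
  rintro t ⟨ht₀, htT⟩
  have hv₁ : 0 < v.1 := hv ▸ Real.sqrt_pos.2 (by positivity)
  have hvv : lorentzPairing v v = 1 := by
    rw [lorentzPairing_apply, ← sq, ← sq, hv, Real.sq_sqrt (by positivity)]
    ring
  have hτ (z k : ℝ × ℝ) (hk : |k.2| < k.1) : u z + lorentzNorm k ≤ u (z + k) :=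
    hLip.add_le_of_le_fderiv (fun x hx => lorentzNorm_le_apply (hpast x hx)
      (hvisc.one_le_of_hasFDerivAt isOpen_univ hLip.continuous.continuousOn (mem_univ x)
        hx.hasFDerivAt) hk.le) z
  set s := min t (T - t)
  have hs : 0 < s := lt_min ht₀ (sub_pos.2 htT)
  have hback : u (p + t • v - s • v) = u (p + t • v) - s := by
    rw [add_sub_assoc, ← sub_smul, hcal _ ⟨sub_nonneg.2 (min_le_left _ _), by linarith⟩,
      hcal t ⟨ht₀.le, htT.le⟩]
    ring
  have hfwd : u (p + t • v + s • v) = u (p + t • v) + s := by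
    rw [add_assoc, ← add_smul, hcal _ ⟨by linarith, by linarith [min_le_right t (T - t)]⟩,
      hcal t ⟨ht₀.le, htT.le⟩]
    ring
  have hD := hasFDerivAt_of_forall_add_lorentzNorm_le hτ hvv hv₁ hs hback hfwd
  exact ⟨hD.differentiableAt, by simp [hD.fderiv], by simp [hD.fderiv]⟩

/-- Let `u` be a locally Lipschitz viscosity solution of the Lorentzian eikonal
equation on 2-dimensional Minkowski space-time with past-directed time orientation.
If `v = (v₁, v₂)` with `v₁ = √(1 + v₂²)` is a future-directed unit timelike vector and
`u(p + t·v) = u(p) + t` for all `t ∈ [0, T]` (`T > 0`), then for every `t ∈ (0, T)`,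
`u` is differentiable at `p + t·v` with `∂u/∂x(p + t·v) = v₁` and
`∂u/∂y(p + t·v) = -v₂`, i.e. the Lorentzian gradient satisfies `∇u(p + t·v) = -v`. -/
theorem differentiable_along_calibrated_curve
    (u : ℝ × ℝ → ℝ) (hLip : LocallyLipschitz u)
    (hvisc : IsViscositySolution u Set.univ)
    (hpast : ∀ q : ℝ × ℝ, DifferentiableAt ℝ u q → 0 < fderiv ℝ u q (1, 0))
    (p : ℝ × ℝ) (T : ℝ) (hT : 0 < T) (v : ℝ × ℝ)
    (hv : v.1 = Real.sqrt (1 + v.2 ^ 2))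
    (hcal : ∀ t ∈ Set.Icc (0:ℝ) T, u (p + t • v) = u p + t) :
    ∀ t ∈ Set.Ioo (0:ℝ) T, DifferentiableAt ℝ u (p + t • v) ∧
      fderiv ℝ u (p + t • v) (1, 0) = v.1 ∧
      fderiv ℝ u (p + t • v) (0, 1) = -v.2 :=
  differentiable_along_calibrated_curve_general u hLip hvisc hpast p T v hv hcal
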